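/- Let Σ = (X, 𝒟, φ) be a robustly forward complete system. If there exists a bounded nonempty set A ⊆ X such that Σ possesses a non-coercive Lyapunov function with respect to A, then Σ is practically uniformly globally asymptotically stable. -/

import Mathlib

open scoped NNReal ENNReal
open Filter Topology Bornology

noncomputable section

/-- Functions of class 𝒦: continuous, strictly increasing, vanishing at zero. -/
def ClassK (γ : ℝ≥0 → ℝ≥0) : Prop :=
  Continuous γ ∧ StrictMono γ ∧ γ 0 = 0

/-- Functions of class 𝒦∞: class 𝒦 and unbounded. -/
def ClassKinf (γ : ℝ≥0 → ℝ≥0) : Prop :=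
  ClassK γ ∧ ∀ M : ℝ≥0, ∃ r : ℝ≥0, M < γ r

/-- Functions of class 𝒦ℒ. -/
def ClassKL (β : ℝ≥0 → ℝ≥0 → ℝ≥0) : Prop :=
  Continuous (fun p : ℝ≥0 × ℝ≥0 => β p.1 p.2) ∧
  (∀ t : ℝ≥0, ClassK fun r => β r t) ∧
  ∀ r : ℝ≥0, 0 < r →
    StrictAnti (fun t => β r t) ∧ Tendsto (fun t => β r t) atTop (𝓝 0)

/-- Distance of a point to a set, `‖x‖_A`. -/
def dA {X : Type*} [NormedAddCommGroup X] (A : Set X) (x : X) : ℝ≥0 :=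
  (Metric.infDist x A).toNNReal

/-- The open ε-neighborhood `B_ε(A)` of a set. -/
def ballSet {X : Type*} [NormedAddCommGroup X] (ε : ℝ≥0) (A : Set X) : Set X :=
  {x | dA A x < ε}

/-- A (time-invariant) control system with disturbances. -/
structure System (X : Type*) [NormedAddCommGroup X] [NormedSpace ℝ X]
    (W : Type*) [NormedAddCommGroup W] [NormedSpace ℝ W] where
  /-- the set of disturbance values -/
  D : Set W
  D_nonempty : D.Nonempty
  /-- the space of disturbances -/
  Dist : Set (ℝ≥0 → W)
  dist_mem : ∀ d ∈ Dist, ∀ t : ℝ≥0, d t ∈ D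
  /-- axiom of shift invariance -/
  shift_invariant : ∀ d ∈ Dist, ∀ τ : ℝ≥0, (fun t => d (t + τ)) ∈ Dist
  /-- axiom of concatenation -/
  concat_mem : ∀ d₁ ∈ Dist, ∀ d₂ ∈ Dist, ∀ t : ℝ≥0, 0 < t →
      (fun s => if s ≤ t then d₁ s else d₂ (s - t)) ∈ Dist
  /-- the transition map -/
  φ : ℝ≥0 → X → (ℝ≥0 → W) → X
  identity : ∀ (x : X), ∀ d ∈ Dist, φ 0 x d = x
  causality : ∀ (t : ℝ≥0) (x : X), ∀ d ∈ Dist, ∀ d' ∈ Dist,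
      (∀ s ≤ t, d s = d' s) → φ t x d = φ t x d'
  cont : ∀ (x : X), ∀ d ∈ Dist, Continuous fun t : ℝ≥0 => φ t x d
  cocycle : ∀ (t h : ℝ≥0) (x : X), ∀ d ∈ Dist,
      φ h (φ t x d) (fun s => d (t + s)) = φ (t + h) x d

namespace System

variable {X : Type*} [NormedAddCommGroup X] [NormedSpace ℝ X]
variable {W : Type*} [NormedAddCommGroup W] [NormedSpace ℝ W]
variable (S : System X W)

/-- Reachability set within time `T`. -/
def RT (T : ℝ≥0) (B : Set X) : Set X :=
  {y | ∃ t ≤ T, ∃ d ∈ S.Dist, ∃ x ∈ B, y = S.φ t x d}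

/-- Reachability set. -/
def R (B : Set X) : Set X :=
  {y | ∃ t : ℝ≥0, ∃ d ∈ S.Dist, ∃ x ∈ B, y = S.φ t x d}

/-- Robust forward completeness. -/
def RFC : Prop :=
  ∀ C : ℝ≥0, 0 < C → ∀ τ : ℝ≥0, 0 < τ →
    IsBounded (S.RT τ {x : X | ‖x‖₊ ≤ C})

/-- Invariance of a set. -/
def Invariant (A : Set X) : Prop := S.R A ⊆ A

/-- Robust invariance of a set. -/
def RobustlyInvariant (A : Set X) : Prop :=
  S.Invariant A ∧
  ∀ ε : ℝ≥0, 0 < ε → ∀ h : ℝ≥0, 0 < h → ∃ δ : ℝ≥0, 0 < δ ∧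
    ∀ t : ℝ≥0, t ≤ h → ∀ x : X, dA A x ≤ δ → ∀ d ∈ S.Dist, dA A (S.φ t x d) ≤ ε

/-- Lagrange stability of a set. -/
def LagrangeStable (A : Set X) : Prop :=
  ∃ σ : ℝ≥0 → ℝ≥0, ClassKinf σ ∧ ∃ c : ℝ≥0, 0 < c ∧
    ∀ (x : X), ∀ d ∈ S.Dist, ∀ t : ℝ≥0, dA A (S.φ t x d) ≤ σ (dA A x) + c

/-- Uniform (local) stability of a set. -/
def ULS (A : Set X) : Prop :=
  ∀ ε : ℝ≥0, 0 < ε → ∃ δ : ℝ≥0, 0 < δ ∧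
    ∀ x : X, dA A x ≤ δ → ∀ d ∈ S.Dist, ∀ t : ℝ≥0, dA A (S.φ t x d) ≤ ε

/-- Uniform global stability of a set. -/
def UGS (A : Set X) : Prop :=
  ∃ σ : ℝ≥0 → ℝ≥0, ClassKinf σ ∧
    ∀ (x : X), ∀ d ∈ S.Dist, ∀ t : ℝ≥0, dA A (S.φ t x d) ≤ σ (dA A x)

/-- Uniform global asymptotic stability of a set. -/
def UGAS (A : Set X) : Prop :=
  ∃ β : ℝ≥0 → ℝ≥0 → ℝ≥0, ClassKL β ∧
    ∀ (x : X), ∀ d ∈ S.Dist, ∀ t : ℝ≥0, dA A (S.φ t x d) ≤ β (dA A x) t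

/-- Practical uniform global asymptotic stability of a set. -/
def PUGASSet (A : Set X) : Prop :=
  ∃ β : ℝ≥0 → ℝ≥0 → ℝ≥0, ClassKL β ∧ ∃ c : ℝ≥0, 0 < c ∧
    ∀ (x : X), ∀ d ∈ S.Dist, ∀ t : ℝ≥0, dA A (S.φ t x d) ≤ β (dA A x) t + c

/-- Global weak attractivity of a set. -/
def GWA (A : Set X) : Prop :=
  ∀ (x : X), ∀ d ∈ S.Dist, ∀ ε : ℝ≥0, 0 < ε → ∃ t : ℝ≥0, dA A (S.φ t x d) ≤ ε

/-- Uniform global weak attractivity of a set. -/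
def UGWA (A : Set X) : Prop :=
  ∀ ε : ℝ≥0, 0 < ε → ∀ r : ℝ≥0, 0 < r → ∃ τ : ℝ≥0,
    ∀ x : X, dA A x ≤ r → ∀ d ∈ S.Dist, ∃ t ≤ τ, dA A (S.φ t x d) ≤ ε

/-- Uniform global attractivity of a set. -/
def UGATT (A : Set X) : Prop :=
  ∀ ε : ℝ≥0, 0 < ε → ∀ r : ℝ≥0, 0 < r → ∃ τ : ℝ≥0,
    ∀ x : X, dA A x ≤ r → ∀ d ∈ S.Dist, ∀ t : ℝ≥0, τ ≤ t → dA A (S.φ t x d) ≤ ε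

/-- Uniform ultimate boundedness of the system. -/
def UUB : Prop :=
  ∃ K : ℝ≥0, 0 < K ∧ ∀ r : ℝ≥0, 0 < r → ∃ T : ℝ≥0,
    ∀ x : X, ‖x‖₊ ≤ r → ∀ d ∈ S.Dist, ∀ t : ℝ≥0, T ≤ t → ‖S.φ t x d‖₊ ≤ K

/-- Global recurrence of a set. -/
def GloballyRecurrent (A : Set X) : Prop :=
  ∀ (x : X), ∀ d ∈ S.Dist, ∃ t : ℝ≥0, S.φ t x d ∈ A

/-- Uniform global recurrence of a set. -/
def UniformlyGloballyRecurrent (A : Set X) : Prop :=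
  ∀ R : ℝ≥0, 0 < R → ∃ τ : ℝ≥0,
    ∀ x : X, dA A x ≤ R → ∀ d ∈ S.Dist, ∃ t ≤ τ, S.φ t x d ∈ A

/-- The set `P₊(A) = ⋂_{ε>0} ℛ(B_ε(A))`. -/
def Pplus (A : Set X) : Set X := ⋂ (ε : ℝ≥0) (_ : 0 < ε), S.R (ballSet ε A)

/-- Non-coercive Lyapunov function w.r.t. a bounded set `A`. -/
def NonCoerciveLyapunov (A : Set X) (V : X → ℝ) : Prop :=
  Continuous V ∧ (∀ x : X, 0 ≤ V x) ∧ (∀ x ∈ A, V x = 0) ∧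
  (∃ ψ₂ : ℝ≥0 → ℝ≥0, ClassKinf ψ₂ ∧
    ∀ x ∉ A, 0 < V x ∧ V x ≤ (ψ₂ (dA A x) : ℝ)) ∧
  (∃ α : ℝ≥0 → ℝ≥0, ClassK α ∧ ∀ x ∉ A, ∀ d ∈ S.Dist,
    Filter.liminf (fun t : ℝ≥0 => (V (S.φ t x d) - V x) / (t : ℝ))
      (𝓝[>] (0 : ℝ≥0)) ≤ -(α (dA A x) : ℝ))

/-- The system is Lagrange stable if some bounded nonempty set is Lagrange stable. -/
def SystemLagrangeStable : Prop :=
  ∃ A : Set X, A.Nonempty ∧ IsBounded A ∧ S.LagrangeStable A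

/-- The system is pUGAS if some bounded nonempty set is pUGAS. -/
def SystemPUGAS : Prop :=
  ∃ A : Set X, A.Nonempty ∧ IsBounded A ∧ S.PUGASSet A

end System

/-!
Outside the unit neighbourhood of `A` the Lyapunov function decays along every trajectory at
rate at least `α 1`, and `V ≤ ψ₂ (‖·‖_A)`, so a trajectory spends at most
`θ r = ψ₂ r / α 1` units of time outside that neighbourhood after being at distance `r`.
Hence at time `t` either `t ≤ θ ‖x‖_A`, and robust forward completeness bounds `‖φ t x d‖_A` by a
monotone function `B ‖x‖_A`, or the trajectory visited the unit neighbourhood during the last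
`θ 1` units of time, and then `‖φ t x d‖_A ≤ B 1`. Majorizing `B` by a `𝒦` function `σ` up to the
constant `B 1`, one may take `β r t = σ r (1 + θ r) / (1 + t)` and `c = B 1 + 1`.
-/

theorem Real.frequently_lt_of_liminf_lt_of_neg {ι : Type*} {l : Filter ι} {F : ι → ℝ} {r : ℝ}
    (hneg : liminf F l < 0) (h : liminf F l < r) : ∃ᶠ x in l, F x < r := by
  refine frequently_lt_of_liminf_lt ?_ h
  by_contra hF
  rw [Real.liminf_of_not_isCoboundedUnder hF] at hneg
  exact hneg.false

theorem NNReal.le_sub_mul_of_liminf_slope_le {g : ℝ≥0 → ℝ} (hg : Continuous g) {L : ℝ}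
    (hL : 0 < L) {a t : ℝ≥0} (hat : a ≤ t)
    (hslope : ∀ u ∈ Set.Ico a t,
      liminf (fun h : ℝ≥0 => (g (u + h) - g u) / h) (𝓝[>] 0) ≤ -L) :
    g t ≤ g a - L * (t - a) := by
  suffices ∀ x ∈ Set.Ico (a : ℝ) t, ∀ r, -L < r →
      ∃ᶠ z in 𝓝[>] x, slope (g ∘ Real.toNNReal) x z < r by
    simpa using image_le_of_liminf_slope_right_le_deriv_boundary
      (hg.comp continuous_real_toNNReal).continuousOn (B := fun x => g a - L * (x - a))
      (by simp) (by fun_prop) (fun x _ => by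
        simpa using ((hasDerivWithinAt_id x _).sub_const (a : ℝ)).const_mul L |>.const_sub (g a))
      this (show (t : ℝ) ∈ Set.Icc (a : ℝ) t from ⟨by exact_mod_cast hat, le_rfl⟩)
  intro x hx r hr
  lift x to ℝ≥0 using a.2.trans hx.1
  have hx' : x ∈ Set.Ico a t := ⟨by exact_mod_cast hx.1, by exact_mod_cast hx.2⟩
  have hshift : Tendsto (fun h : ℝ≥0 => (x : ℝ) + h) (𝓝[>] 0) (𝓝[>] (x : ℝ)) := by
    refine tendsto_nhdsWithin_iff.mpr ⟨?_, eventually_mem_nhdsWithin.mono fun h hh => ?_⟩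
    · exact ((continuous_const.add NNReal.continuous_coe).tendsto' 0 _ (by simp)).mono_left
        nhdsWithin_le_nhds
    · simpa using hh
  refine hshift.frequently ((Real.frequently_lt_of_liminf_lt_of_neg
    ((hslope x hx').trans_lt (by linarith)) ((hslope x hx').trans_lt hr)).mono fun h hh => ?_)
  rw [slope_def_field, ← NNReal.coe_add, Function.comp_apply, Function.comp_apply,
    Real.toNNReal_coe, Real.toNNReal_coe, NNReal.coe_add, add_sub_cancel_left]
  exact hh

theorem NNReal.forall_lt_or_exists_last_le {α : Type*} [LinearOrder α] [TopologicalSpace α]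
    [OrderClosedTopology α] {f : ℝ≥0 → α} (hf : Continuous f) (c : α) (t : ℝ≥0) :
    (∀ u ≤ t, c < f u) ∨ ∃ s ≤ t, f s ≤ c ∧ ∀ u ∈ Set.Ico s t, c ≤ f u := by
  set U := {u | u ≤ t ∧ f u ≤ c}
  rcases U.eq_empty_or_nonempty with hU | hU
  · exact .inl fun u hu => not_le.mp fun hfu => hU.subset ⟨hu, hfu⟩
  have hUbdd : BddAbove U := ⟨t, fun u hu => hu.1⟩
  obtain ⟨hst, hs⟩ : sSup U ∈ U :=
    (isClosed_Iic.inter (isClosed_Iic.preimage hf)).csSup_mem hU hUbdd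
  refine .inr ⟨sSup U, hst, hs, fun u hu => ?_⟩
  have hafter : Set.Ioc (sSup U) t ⊆ {u | c ≤ f u} := fun v hv =>
    le_of_not_ge fun hfv => hv.1.not_ge (le_csSup hUbdd ⟨hv.2, hfv⟩)
  have hclosure := closure_minimal hafter (isClosed_le continuous_const hf)
  rw [closure_Ioc (hu.1.trans_lt hu.2).ne] at hclosure
  exact hclosure (Set.Ico_subset_Icc_self hu)

theorem Monotone.exists_classK_le_add {b : ℝ≥0 → ℝ≥0} (hb : Monotone b) :
    ∃ σ, ClassK σ ∧ ∀ r, b r ≤ σ r + b 1 := by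
  -- `σ r = ∫₀ʳ f`: the `+ 1` makes it strictly increasing, the shift gives `∫_{r-1}^r f ≥ b r`.
  set f : ℝ → ℝ := fun s => b (s + 1).toNNReal + 1
  have hf : Monotone f := fun u v huv => by
    simp only [f]; gcongr; exact hb (Real.toNNReal_mono (by linarith))
  have hfi : ∀ u v, IntervalIntegrable f MeasureTheory.volume u v :=
    fun _ _ => hf.intervalIntegrable
  set F : ℝ → ℝ := fun r => ∫ s in (0 : ℝ)..r, f s
  have hF_ge : ∀ {u v c}, u ≤ v → (∀ s ∈ Set.Icc u v, c ≤ f s) → F u + c * (v - u) ≤ F v := by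
    intro u v c huv hc
    rw [show F v = F u + ∫ s in u..v, f s from
      (intervalIntegral.integral_add_adjacent_intervals (hfi 0 u) (hfi u v)).symm]
    gcongr
    simpa [mul_comm] using
      intervalIntegral.integral_mono_on huv intervalIntegrable_const (hfi u v) hc
  have hf1 : ∀ s, 1 ≤ f s := fun s => by simp [f]
  have hF_strictMono : StrictMono F := fun u v huv => by
    linarith [hF_ge huv.le fun s _ => hf1 s]
  have hF_nonneg : ∀ r, 0 ≤ r → 0 ≤ F r := fun r hr => by
    simpa [F] using hF_ge hr fun s _ => zero_le_one.trans (hf1 s)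
  refine ⟨fun r => ⟨F r, hF_nonneg r r.2⟩, ⟨?_, ?_, ?_⟩, fun r => ?_⟩
  · exact (intervalIntegral.continuous_primitive hfi 0 |>.comp NNReal.continuous_coe).subtype_mk _
  · exact fun u v huv => hF_strictMono (NNReal.coe_lt_coe.mpr huv)
  · exact Subtype.ext (by simp [F])
  rcases le_total r 1 with hr | hr
  · exact le_add_left (hb hr)
  have hr' : (1 : ℝ) ≤ r := by exact_mod_cast hr
  have hb_le : ∀ s ∈ Set.Icc ((r : ℝ) - 1) r, (b r : ℝ) ≤ f s := fun s hs => by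
    have : r ≤ (s + 1).toNNReal :=
      (Real.le_toNNReal_iff_coe_le (by linarith [hs.1])).mpr (by linarith [hs.1])
    linarith [NNReal.coe_le_coe.mpr (hb this)]
  have hbF : (b r : ℝ) ≤ F r := by
    linarith [hF_ge (sub_le_self _ zero_le_one) hb_le, hF_nonneg (r - 1) (by linarith)]
  exact le_add_right (NNReal.coe_le_coe.mp hbF)

theorem ClassK.mul_one_add {σ θ : ℝ≥0 → ℝ≥0} (hσ : ClassK σ) (hθc : Continuous θ)
    (hθm : Monotone θ) : ClassK fun r => σ r * (1 + θ r) := by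
  obtain ⟨hσc, hσm, hσ0⟩ := hσ
  refine ⟨hσc.mul (continuous_const.add hθc), fun u v huv => ?_, by simp [hσ0]⟩
  calc σ u * (1 + θ u) < σ v * (1 + θ u) := by gcongr; exact hσm huv
    _ ≤ σ v * (1 + θ v) := by gcongr; exact hθm huv.le

theorem ClassK.classKL_div_one_add {κ : ℝ≥0 → ℝ≥0} (hκ : ClassK κ) :
    ClassKL fun r t => κ r / (1 + t) := by
  obtain ⟨hκc, hκm, hκ0⟩ := hκ
  refine ⟨(hκc.comp continuous_fst).div (continuous_const.add continuous_snd) (by simp),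
    fun t => ⟨hκc.div_const _, fun u v huv => ?_, by simp [hκ0]⟩,
    fun r hr => ⟨fun u v huv => ?_, ?_⟩⟩
  · exact div_lt_div_of_pos_right (hκm huv) (by positivity)
  · have : 0 < κ r := hκ0 ▸ hκm hr
    exact div_lt_div_of_pos_left this (by positivity) (by simpa using huv)
  · rw [← NNReal.tendsto_coe]
    push_cast
    exact tendsto_const_nhds.div_atTop
      (tendsto_atTop_add_const_left _ _ (NNReal.tendsto_coe_atTop.2 tendsto_id))

section DistanceToSet

variable {X : Type*} [NormedAddCommGroup X] {A s : Set X}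

theorem continuous_dA (A : Set X) : Continuous (dA A) :=
  continuous_real_toNNReal.comp (Metric.continuous_infDist_pt A)

theorem isBounded_setOf_dA_le (hA : IsBounded A) (hne : A.Nonempty) (r : ℝ≥0) :
    IsBounded {x | dA A x ≤ r} := by
  obtain ⟨a, ha⟩ := hne
  refine (Metric.isBounded_closedBall (x := a) (r := r + Metric.diam A)).subset fun x hx => ?_
  have : Metric.infDist x A ≤ r := (Real.toNNReal_le_iff_le_coe).mp hx
  rw [Metric.mem_closedBall]
  linarith [Metric.dist_le_infDist_add_diam (x := x) hA ha]

theorem bddAbove_dA_image (hne : A.Nonempty) (hs : IsBounded s) : BddAbove (dA A '' s) := by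
  obtain ⟨a, ha⟩ := hne
  obtain ⟨R, hR⟩ := hs.subset_closedBall a
  refine ⟨R.toNNReal, Set.forall_mem_image.mpr fun x hx => ?_⟩
  exact Real.toNNReal_mono ((Metric.infDist_le_dist_of_mem ha).trans (hR hx))

end DistanceToSet

namespace System

variable {X : Type*} [NormedAddCommGroup X] [NormedSpace ℝ X]
variable {W : Type*} [NormedAddCommGroup W] [NormedSpace ℝ W]
variable {S : System X W} {A B B' : Set X} {x : X} {d : ℝ≥0 → W} {s t τ τ' : ℝ≥0}

theorem shift_mem (hd : d ∈ S.Dist) (s : ℝ≥0) : (fun u => d (s + u)) ∈ S.Dist := by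
  simpa only [add_comm] using S.shift_invariant d hd s

theorem φ_mem_RT (hd : d ∈ S.Dist) (hst : s ≤ t) (hτ : t - s ≤ τ) (hs : S.φ s x d ∈ B) :
    S.φ t x d ∈ S.RT τ B :=
  ⟨t - s, hτ, _, S.shift_mem hd s, _, hs, by rw [S.cocycle _ _ _ _ hd, add_tsub_cancel_of_le hst]⟩

theorem RT_mono (hτ : τ ≤ τ') (hB : B ⊆ B') : S.RT τ B ⊆ S.RT τ' B' :=
  fun _ ⟨t, ht, d, hd, x, hx, hy⟩ => ⟨t, ht.trans hτ, d, hd, x, hB hx, hy⟩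

theorem RFC.isBounded_RT (hS : S.RFC) (τ : ℝ≥0) (hB : IsBounded B) : IsBounded (S.RT τ B) := by
  obtain ⟨C, hC⟩ := isBounded_iff_forall_norm_le.mp hB
  refine (hS (C.toNNReal + 1) (by positivity) (τ + 1) (by positivity)).subset
    (RT_mono le_self_add fun x hx => ?_)
  change ‖x‖₊ ≤ _
  rw [← norm_toNNReal]
  exact (Real.toNNReal_le_toNNReal (hC x hx)).trans le_self_add

/-- A junk `0` when the reachable set is unbounded, which `RFC` rules out for bounded nonempty `A`
(`dA_le_reachDist`). -/
def reachDist (S : System X W) (A : Set X) (τ r : ℝ≥0) : ℝ≥0 :=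
  sSup (dA A '' S.RT τ {x | dA A x ≤ r})

variable {r r' : ℝ≥0}

theorem bddAbove_reachDist (hS : S.RFC) (hA : IsBounded A) (hne : A.Nonempty) :
    BddAbove (dA A '' S.RT τ {x | dA A x ≤ r}) :=
  bddAbove_dA_image hne (hS.isBounded_RT τ (isBounded_setOf_dA_le hA hne r))

theorem dA_le_reachDist (hS : S.RFC) (hA : IsBounded A) (hne : A.Nonempty) {y : X}
    (hy : y ∈ S.RT τ {x | dA A x ≤ r}) : dA A y ≤ S.reachDist A τ r :=
  le_csSup (bddAbove_reachDist hS hA hne) (Set.mem_image_of_mem _ hy)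

theorem reachDist_mono (hS : S.RFC) (hA : IsBounded A) (hne : A.Nonempty) (hτ : τ ≤ τ')
    (hr : r ≤ r') : S.reachDist A τ r ≤ S.reachDist A τ' r' :=
  csSup_le_csSup' (bddAbove_reachDist hS hA hne)
    (Set.image_mono (RT_mono hτ fun _ hx => le_trans hx hr))

def TimeOutsideBound (S : System X W) (A : Set X) (θ : ℝ≥0 → ℝ≥0) : Prop :=
  ∀ x, ∀ d ∈ S.Dist, ∀ a t, a ≤ t → (∀ u ∈ Set.Ico a t, 1 ≤ dA A (S.φ u x d)) →
    t - a ≤ θ (dA A (S.φ a x d))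

theorem NonCoerciveLyapunov.exists_timeOutsideBound {V : X → ℝ}
    (hV : S.NonCoerciveLyapunov A V) :
    ∃ θ, Continuous θ ∧ Monotone θ ∧ S.TimeOutsideBound A θ := by
  obtain ⟨hVc, hV0, hVA, ⟨ψ, ⟨⟨hψc, hψm, -⟩, -⟩, hVψ⟩, ⟨α, ⟨-, hαm, hα0⟩, hdecay⟩⟩ := hV
  have hα1 : 0 < α 1 := hα0 ▸ hαm one_pos
  have hVle : ∀ x, V x ≤ ψ (dA A x) := fun x => by
    by_cases hx : x ∈ A
    · simp [hVA x hx]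
    · exact (hVψ x hx).2
  refine ⟨fun r => ψ r / α 1, hψc.div_const _,
    fun u v huv => (div_le_div_iff_of_pos_right hα1).mpr (hψm.monotone huv),
    fun x d hd a t hat hout => ?_⟩
  have hslope : ∀ u ∈ Set.Ico a t,
      liminf (fun h : ℝ≥0 => (V (S.φ (u + h) x d) - V (S.φ u x d)) / h) (𝓝[>] 0) ≤ -α 1 := by
    intro u hu
    have hnotA : S.φ u x d ∉ A := fun hA => by
      simpa [dA, Metric.infDist_zero_of_mem hA] using hout u hu
    have := hdecay _ hnotA _ (S.shift_mem hd u)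
    simp only [S.cocycle _ _ _ _ hd] at this
    exact this.trans (neg_le_neg (NNReal.coe_le_coe.mpr (hαm.monotone (hout u hu))))
  have hfence : V (S.φ t x d) ≤ V (S.φ a x d) - α 1 * (t - a) :=
    NNReal.le_sub_mul_of_liminf_slope_le (hVc.comp (S.cont x d hd)) (NNReal.coe_pos.mpr hα1) hat
      hslope
  rw [le_div_iff₀ hα1, ← NNReal.coe_le_coe, NNReal.coe_mul, NNReal.coe_sub hat]
  linarith [hV0 (S.φ t x d), hVle (S.φ a x d)]

theorem TimeOutsideBound.le_or_exists_visit {θ : ℝ≥0 → ℝ≥0} (hθ : S.TimeOutsideBound A θ)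
    (hθm : Monotone θ) (hd : d ∈ S.Dist) (t : ℝ≥0) :
    t ≤ θ (dA A x) ∨ ∃ s ≤ t, dA A (S.φ s x d) ≤ 1 ∧ t - s ≤ θ 1 := by
  rcases NNReal.forall_lt_or_exists_last_le ((continuous_dA A).comp (S.cont x d hd)) 1 t with
    hout | ⟨s, hst, hs, hout⟩
  · left
    simpa [S.identity x d hd] using hθ x d hd 0 t zero_le fun u hu => (hout u hu.2.le).le
  · exact .inr ⟨s, hst, hs, (hθ x d hd s t hst hout).trans (hθm hs)⟩

theorem TimeOutsideBound.dA_φ_le {θ : ℝ≥0 → ℝ≥0} (hθ : S.TimeOutsideBound A θ)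
    (hθm : Monotone θ) (hS : S.RFC) (hA : IsBounded A) (hne : A.Nonempty) (hd : d ∈ S.Dist)
    (t : ℝ≥0) :
    t ≤ θ (dA A x) ∧ dA A (S.φ t x d) ≤ S.reachDist A (θ (dA A x)) (dA A x) ∨
      dA A (S.φ t x d) ≤ S.reachDist A (θ 1) 1 := by
  rcases hθ.le_or_exists_visit hθm hd t with ht | ⟨s, hst, hs, hts⟩
  · refine .inl ⟨ht, dA_le_reachDist hS hA hne (φ_mem_RT hd zero_le (by simpa using ht) ?_)⟩
    simp [S.identity x d hd]
  · exact .inr (dA_le_reachDist hS hA hne (φ_mem_RT hd hst hts hs))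

end System

/-- RFC plus a non-coercive Lyapunov function w.r.t. a bounded
nonempty set implies practical UGAS. -/
theorem stmt12 {X : Type*} [NormedAddCommGroup X] [NormedSpace ℝ X]
    {W : Type*} [NormedAddCommGroup W] [NormedSpace ℝ W] (S : System X W) (hRFC : S.RFC)
    (h : ∃ A : Set X, A.Nonempty ∧ IsBounded A ∧
      ∃ V : X → ℝ, S.NonCoerciveLyapunov A V) :
    S.SystemPUGAS := by
  obtain ⟨A, hne, hA, V, hV⟩ := h
  obtain ⟨θ, hθc, hθm, hθ⟩ := hV.exists_timeOutsideBound
  set B : ℝ≥0 → ℝ≥0 := fun r => S.reachDist A (θ r) r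
  obtain ⟨σ, hσ, hσB⟩ := Monotone.exists_classK_le_add (b := B) fun u v huv =>
    System.reachDist_mono hRFC hA hne (hθm huv) huv
  refine ⟨A, hne, hA, _, (hσ.mul_one_add hθc hθm).classKL_div_one_add, B 1 + 1, by positivity,
    fun x d hd t => ?_⟩
  rcases hθ.dA_φ_le hθm hRFC hA hne hd t with ⟨ht, hle⟩ | hle
  · calc dA A (S.φ t x d) ≤ B (dA A x) := hle
      _ ≤ σ (dA A x) + B 1 := hσB _
      _ ≤ σ (dA A x) * (1 + θ (dA A x)) / (1 + t) + (B 1 + 1) := by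
        gcongr
        · rw [le_div_iff₀ (by positivity)]
          gcongr
        · exact le_self_add
  · exact hle.trans (le_add_left le_self_add)
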